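/- Let f : X → Y be a Reedy fibration between marked bisimplicial sets, let n ≥ 2, and let i : A ⊆ Δⁿ be a simplicial subset containing Δ^{0,1}. Then the following are equivalent: (1) the map ⟨i^ℒ \ f⟩ : (Δⁿ)^ℒ \ X → (Δⁿ)^ℒ \ Y ×_{A^ℒ \ Y} A^ℒ \ X is a trivial Kan fibration; (2) for every marked edge e ∈ X_{1,0}, the map p_e : (Δⁿ \ X̊)^e → (Δⁿ \ Y̊)^{f(e)} ×_{(A \ Y̊)^{f(e)}} (A \ X̊)^e is a trivial Kan fibration. -/

import Mathlib

set_option linter.unusedVariables false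

open CategoryTheory CategoryTheory.Limits Simplicial Opposite

namespace Paper

abbrev BSSet : Type 1 := SimplexCategoryᵒᵖ × SimplexCategoryᵒᵖ ⥤ Type

@[simps]
def boxObj (A B : SSet.{0}) : BSSet where
  obj p := A.obj p.1 × B.obj p.2
  map f := ↾fun x => (A.map f.1 x.1, B.map f.2 x.2)
  map_id p := by ext x <;> simp
  map_comp f g := by ext x <;> simp

@[simps]
def boxMap {A A' B B' : SSet.{0}} (u : A ⟶ A') (v : B ⟶ B') :
    boxObj A B ⟶ boxObj A' B' where
  app p := ↾fun x => (u.app p.1 x.1, v.app p.2 x.2)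
  naturality p q φ := by
    refine ConcreteCategory.hom_ext _ _ fun x => ?_
    simp only [types_comp_apply, TypeCat.ofHom_apply]
    exact Prod.ext (NatTrans.naturality_apply u φ.1 x.1) (NatTrans.naturality_apply v φ.2 x.2)

lemma boxMap_id (A B : SSet.{0}) : boxMap (𝟙 A) (𝟙 B) = 𝟙 (boxObj A B) := rfl

lemma boxMap_comp {A A' A'' B B' B'' : SSet.{0}} (u : A ⟶ A') (u' : A' ⟶ A'')
    (v : B ⟶ B') (v' : B' ⟶ B'') :
    boxMap (u ≫ u') (v ≫ v') = boxMap u v ≫ boxMap u' v' := rfl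

def under (A : SSet.{0}) (X : BSSet) : SSet.{0} where
  obj n := boxObj A (SSet.stdSimplex.obj n.unop) ⟶ X
  map φ := ↾fun σ => boxMap (𝟙 A) (SSet.stdSimplex.map φ.unop) ≫ σ
  map_id n := by
    refine ConcreteCategory.hom_ext _ _ fun σ => ?_
    show boxMap (𝟙 A) (SSet.stdSimplex.map (𝟙 n.unop)) ≫ σ = σ
    erw [CategoryTheory.Functor.map_id, boxMap_id, Category.id_comp]
  map_comp {n m k} φ ψ := by
    refine ConcreteCategory.hom_ext _ _ fun σ => ?_
    show boxMap (𝟙 A) (SSet.stdSimplex.map (ψ.unop ≫ φ.unop)) ≫ σ = _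
    erw [Functor.map_comp, show (𝟙 A : A ⟶ A) = 𝟙 A ≫ 𝟙 A from (Category.id_comp _).symm,
      boxMap_comp, Category.assoc]
    rfl

def overBS (X : BSSet) (B : SSet.{0}) : SSet.{0} where
  obj n := boxObj (SSet.stdSimplex.obj n.unop) B ⟶ X
  map φ := ↾fun σ => boxMap (SSet.stdSimplex.map φ.unop) (𝟙 B) ≫ σ
  map_id n := by
    refine ConcreteCategory.hom_ext _ _ fun σ => ?_
    show boxMap (SSet.stdSimplex.map (𝟙 n.unop)) (𝟙 B) ≫ σ = σ
    erw [CategoryTheory.Functor.map_id, boxMap_id, Category.id_comp]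
  map_comp {n m k} φ ψ := by
    refine ConcreteCategory.hom_ext _ _ fun σ => ?_
    show boxMap (SSet.stdSimplex.map (ψ.unop ≫ φ.unop)) (𝟙 B) ≫ σ = _
    erw [Functor.map_comp, show (𝟙 B : B ⟶ B) = 𝟙 B ≫ 𝟙 B from (Category.id_comp _).symm,
      boxMap_comp, Category.assoc]
    rfl

@[simps]
def underWhisker {A A' : SSet.{0}} (u : A ⟶ A') (X : BSSet) :
    under A' X ⟶ under A X where
  app n := ↾fun σ => boxMap u (𝟙 _) ≫ σ
  naturality n m φ := rfl

@[simps]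
def underPush (A : SSet.{0}) {X Y : BSSet} (f : X ⟶ Y) :
    under A X ⟶ under A Y where
  app n := ↾fun σ => σ ≫ f
  naturality n m φ := rfl

@[simps]
def overPush (B : SSet.{0}) {X Y : BSSet} (f : X ⟶ Y) :
    overBS X B ⟶ overBS Y B where
  app n := ↾fun σ => σ ≫ f
  naturality n m φ := rfl

---- new chunk

/-- The functor `A □ - : SSet ⥤ BSSet`. -/
@[simps]
def boxLFunctor (A : SSet.{0}) : SSet.{0} ⥤ BSSet where
  obj B := boxObj A B
  map v := boxMap (𝟙 A) v
  map_id B := rfl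
  map_comp v w := rfl

/-- The functor `- □ B : SSet ⥤ BSSet`. -/
@[simps]
def boxRFunctor (B : SSet.{0}) : SSet.{0} ⥤ BSSet where
  obj A := boxObj A B
  map u := boxMap u (𝟙 B)
  map_id A := rfl
  map_comp u w := rfl

/-- The functor `A \ - : BSSet ⥤ SSet`. -/
@[simps]
def underFunctor (A : SSet.{0}) : BSSet ⥤ SSet.{0} where
  obj X := under A X
  map f := underPush A f
  map_id X := rfl
  map_comp f g := rfl

/-- The functor `- / B : BSSet ⥤ SSet`. -/
@[simps]
def overFunctor (B : SSet.{0}) : BSSet ⥤ SSet.{0} where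
  obj X := overBS X B
  map f := overPush B f
  map_id X := rfl
  map_comp f g := rfl

/-- A map of simplicial sets is a Kan fibration if it has the right lifting property
with respect to all horn inclusions `Λ[n, i] ⟶ Δ[n]`, `n ≥ 1`, `0 ≤ i ≤ n`. -/
def IsKanFibration {S T : SSet.{0}} (f : S ⟶ T) : Prop :=
  ∀ (n : ℕ) (i : Fin (n + 2)), HasLiftingProperty (SSet.horn (n + 1) i).ι f

/-- A map of simplicial sets is a trivial Kan fibration if it has the right lifting property
with respect to all boundary inclusions `∂Δ[n] ⟶ Δ[n]`. -/
def IsTrivialKanFibration {S T : SSet.{0}} (f : S ⟶ T) : Prop :=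
  ∀ (n : ℕ), HasLiftingProperty (SSet.boundary n).ι f

/-- A map of simplicial sets is an inner fibration if it has the right lifting property
with respect to all inner horn inclusions `Λ[n, i] ⟶ Δ[n]`, `0 < i < n`. -/
def IsInnerFibration {S T : SSet.{0}} (f : S ⟶ T) : Prop :=
  ∀ (n : ℕ) (i : Fin (n + 1)), 0 < (i : ℕ) → (i : ℕ) < n →
    HasLiftingProperty (SSet.horn n i).ι f

lemma underSq {A A' : SSet.{0}} (u : A ⟶ A') {X Y : BSSet} (f : X ⟶ Y) :
    underWhisker u X ≫ underPush A f = underPush A' f ≫ underWhisker u Y := rfl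

/-- The gap map `⟨u \ f⟩ : A' \ X ⟶ A \ X ×_{A \ Y} A' \ Y`. -/
noncomputable def underGap {A A' : SSet.{0}} (u : A ⟶ A') {X Y : BSSet} (f : X ⟶ Y) :
    under A' X ⟶ pullback (underPush A f) (underWhisker u Y) :=
  pullback.lift (underWhisker u X) (underPush A' f) (underSq u f)

/-- A map of bisimplicial sets is a Reedy fibration if for every monomorphism `u : A ⟶ A'`
of simplicial sets, the gap map `⟨u \ f⟩` is a Kan fibration. -/
def IsReedyFibration {X Y : BSSet} (f : X ⟶ Y) : Prop :=
  ∀ ⦃A A' : SSet.{0}⦄ (u : A ⟶ A'), Mono u → IsKanFibration (underGap u f)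

/-- A bisimplicial set is Reedy fibrant if for every monomorphism `u : A ⟶ A'` of
simplicial sets, the restriction map `⟨u \ X⟩ : A' \ X ⟶ A \ X` is a Kan fibration. -/
def IsReedyFibrant (X : BSSet) : Prop :=
  ∀ ⦃A A' : SSet.{0}⦄ (u : A ⟶ A'), Mono u → IsKanFibration (underWhisker u X)

/-- The cylinder `A × Δ¹` on a simplicial set. -/
def cyl (A : SSet.{0}) : SSet.{0} where
  obj n := A.obj n × Δ[1].obj n
  map f := ↾fun x => (A.map f x.1, Δ[1].map f x.2)
  map_id n := by ext x <;> simp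
  map_comp f g := by ext x <;> simp

/-- The inclusion `A ⟶ A × Δ¹` at the vertex `k` of `Δ¹`. -/
def cylIncl (k : Fin 2) (A : SSet.{0}) : A ⟶ cyl A where
  app n := ↾fun a => (a, SSet.stdSimplex.const 1 k n)
  naturality n m f := rfl

/-- Functoriality of the cylinder. -/
def cylMap {A B : SSet.{0}} (f : A ⟶ B) : cyl A ⟶ cyl B where
  app n := ↾fun x => (f.app n x.1, x.2)
  naturality n m φ := by
    refine ConcreteCategory.hom_ext _ _ fun x => ?_
    simp only [types_comp_apply, TypeCat.ofHom_apply]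
    exact Prod.ext (NatTrans.naturality_apply f φ x.1) rfl

lemma cylIncl_cylMap (k : Fin 2) {A B : SSet.{0}} (f : A ⟶ B) :
    cylIncl k A ≫ cylMap f = f ≫ cylIncl k B := rfl

/-- Two maps of simplicial sets are related by an elementary homotopy if there is a
cylinder homotopy from one to the other. -/
def HomotopicOne {A B : SSet.{0}} (f g : A ⟶ B) : Prop :=
  ∃ H : cyl A ⟶ B, cylIncl 0 A ≫ H = f ∧ cylIncl 1 A ≫ H = g

/-- A Kan complex: every horn has a filler. -/
def IsKanComplex (S : SSet.{0}) : Prop :=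
  ∀ (n : ℕ) (i : Fin (n + 2)) (g : (Λ[n + 1, i] : SSet.{0}) ⟶ S),
    ∃ h : Δ[n + 1] ⟶ S, (SSet.horn (n + 1) i).ι ≫ h = g

/-- Precomposition on homotopy classes of maps. -/
def precompClass {A B : SSet.{0}} (f : A ⟶ B) (Z : SSet.{0}) :
    Quot (@HomotopicOne B Z) → Quot (@HomotopicOne A Z) :=
  Quot.lift (fun g => Quot.mk _ (f ≫ g)) (by
    rintro g g' ⟨H, h0, h1⟩
    apply Quot.sound
    refine ⟨cylMap f ≫ H, ?_, ?_⟩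
    · rw [← Category.assoc, cylIncl_cylMap, Category.assoc, h0]
    · rw [← Category.assoc, cylIncl_cylMap, Category.assoc, h1])

/-- A map of simplicial sets is a weak homotopy equivalence iff for every Kan complex `Z`
the induced map on homotopy classes of maps into `Z` is a bijection. -/
def WeakEquiv {A B : SSet.{0}} (f : A ⟶ B) : Prop :=
  ∀ Z : SSet.{0}, IsKanComplex Z → Function.Bijective (precompClass f Z)

/-- A commutative square of simplicial sets (with `g` thought of as the right-hand vertical
map) is a homotopy pullback if for some factorization of `g` as a weak equivalence followed
by a Kan fibration, the induced gap map to the strict pullback is a weak equivalence. -/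
noncomputable def IsHomotopyPullback {W U V Z : SSet.{0}}
    (a : W ⟶ U) (b : W ⟶ V) (g : U ⟶ Z) (h : V ⟶ Z) (comm : a ≫ g = b ≫ h) : Prop :=
  ∃ (U' : SSet.{0}) (w : U ⟶ U') (p : U' ⟶ Z) (hwp : w ≫ p = g),
    WeakEquiv w ∧ IsKanFibration p ∧
      WeakEquiv (pullback.lift (a ≫ w) b
        (by rw [Category.assoc, hwp, comm]) : W ⟶ pullback p h)

/-- The spine of `Δ[n]`: the union of the edges `Δ{i, i+1}`. -/
def spine (n : ℕ) : SSet.{0} where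
  obj m := { a : Δ[n].obj m //
    ∃ i : ℕ, ∀ j, ((SSet.stdSimplex.asOrderHom a) j : ℕ) = i ∨ ((SSet.stdSimplex.asOrderHom a) j : ℕ) = i + 1 }
  map f := ↾fun a => ⟨Δ[n].map f a.1, by
    obtain ⟨i, hi⟩ := a.2
    exact ⟨i, fun j => hi _⟩⟩
  map_id m := by
    refine ConcreteCategory.hom_ext _ _ fun a => ?_
    apply Subtype.ext
    show Δ[n].map (𝟙 m) a.1 = a.1
    simp
  map_comp f g := by
    refine ConcreteCategory.hom_ext _ _ fun a => ?_
    apply Subtype.ext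
    show Δ[n].map (f ≫ g) a.1 = Δ[n].map g (Δ[n].map f a.1)
    simp

def spineIncl (n : ℕ) : spine n ⟶ Δ[n] where
  app m := ↾fun a => a.1
  naturality n m f := rfl


/-- A Segal space: a Reedy fibrant bisimplicial set whose Segal maps
`X_n ⟶ X_1 ×_{X_0} ⋯ ×_{X_0} X_1` (i.e. the restrictions `Δⁿ \\ X ⟶ Iₙ \\ X` along the
spine inclusions) are weak homotopy equivalences for `n ≥ 2`. -/
def IsSegalSpace (X : BSSet) : Prop :=
  IsReedyFibrant X ∧ ∀ n : ℕ, 2 ≤ n → WeakEquiv (underWhisker (spineIncl n) X)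

/-- The unique map to `⦋0⦌` in the simplex category. -/
def toZero (m : SimplexCategory) : m ⟶ ⦋0⦌ :=
  SimplexCategory.Hom.mk ⟨fun _ => 0, fun _ _ _ => le_rfl⟩

lemma toZero_unique {m : SimplexCategory} (f g : m ⟶ ⦋0⦌) : f = g := by
  apply SimplexCategory.Hom.ext
  apply OrderHom.ext
  funext j
  apply Fin.ext
  have h1 : ((f.toOrderHom j : Fin (⦋0⦌.len + 1)) : ℕ) < 0 + 1 := (f.toOrderHom j).isLt
  have h2 : ((g.toOrderHom j : Fin (⦋0⦌.len + 1)) : ℕ) < 0 + 1 := (g.toOrderHom j).isLt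
  omega

lemma toZero_comp {m m' : SimplexCategory} (φ : m' ⟶ m) :
    φ ≫ toZero m = toZero m' :=
  toZero_unique _ _

lemma boxMapR_comp (A : SSet.{0}) {B B' B'' : SSet.{0}} (v : B ⟶ B') (w : B' ⟶ B'') :
    boxMap (𝟙 A) (v ≫ w) = boxMap (𝟙 A) v ≫ boxMap (𝟙 A) w := rfl

/-- The map `Δ[1] □ Δ[0] ⟶ X` corresponding to an element `e ∈ X_{1,0}` by the Yoneda lemma. -/
def yonedaBox {X : BSSet} (e : X.obj (op ⦋1⦌, op ⦋0⦌)) :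
    boxObj Δ[1] Δ[0] ⟶ X where
  app p := ↾fun x =>
    X.map ((SSet.stdSimplex.objEquiv x.1).op,
      (SSet.stdSimplex.objEquiv x.2).op) e
  naturality p q φ := by
    refine ConcreteCategory.hom_ext _ _ fun x => ?_
    simp only [types_comp_apply, TypeCat.ofHom_apply]
    rw [← FunctorToTypes.map_comp_apply]
    rfl

def fApp {X Y : BSSet} (f : X ⟶ Y) (e : X.obj (op ⦋1⦌, op ⦋0⦌)) : Y.obj (op ⦋1⦌, op ⦋0⦌) :=
  f.app (op ⦋1⦌, op ⦋0⦌) e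

lemma yonedaBox_comp {X Y : BSSet} (f : X ⟶ Y) (e : X.obj (op ⦋1⦌, op ⦋0⦌)) :
    yonedaBox e ≫ f = yonedaBox (fApp f e) := by
  apply NatTrans.ext
  funext p
  refine ConcreteCategory.hom_ext _ _ fun x => ?_
  exact NatTrans.naturality_apply f _ e

/-- The constant `Δ[1] □ Δ[m]`-diagram in `X` with value the edge `e`. -/
def eConst {X : BSSet} (m : SimplexCategory) (e : X.obj (op ⦋1⦌, op ⦋0⦌)) :
    boxObj Δ[1] (SSet.stdSimplex.obj m) ⟶ X :=
  boxMap (𝟙 Δ[1]) (SSet.stdSimplex.map (toZero m)) ≫ yonedaBox e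

lemma eConst_whisker {X : BSSet} {m m' : SimplexCategory} (φ : m' ⟶ m)
    (e : X.obj (op ⦋1⦌, op ⦋0⦌)) :
    boxMap (𝟙 Δ[1]) (SSet.stdSimplex.map φ) ≫ eConst m e = eConst m' e := by
  erw [eConst, eConst, ← Category.assoc, ← boxMapR_comp, ← Functor.map_comp, toZero_comp]

lemma eConst_comp {X Y : BSSet} (f : X ⟶ Y) {m : SimplexCategory}
    (e : X.obj (op ⦋1⦌, op ⦋0⦌)) :
    eConst m e ≫ f = eConst m (fApp f e) := by
  rw [eConst, eConst, Category.assoc, yonedaBox_comp]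

/-- `(B \ X)^e`: the simplicial set of `B`-shaped diagrams in `X` whose restriction along the
edge `ι : Δ[1] ⟶ B` is constant at the edge `e ∈ X_{1,0}`. -/
def fib {B : SSet.{0}} (ι : Δ[1] ⟶ B) (X : BSSet) (e : X.obj (op ⦋1⦌, op ⦋0⦌)) :
    SSet.{0} where
  obj n := { σ : boxObj B (SSet.stdSimplex.obj n.unop) ⟶ X //
      boxMap ι (𝟙 _) ≫ σ = eConst n.unop e }
  map {n m} φ := ↾fun σ => ⟨boxMap (𝟙 B) (SSet.stdSimplex.map φ.unop) ≫ σ.1, by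
    rw [← Category.assoc,
      show boxMap ι (𝟙 _) ≫ boxMap (𝟙 B) (SSet.stdSimplex.map φ.unop)
        = boxMap (𝟙 Δ[1]) (SSet.stdSimplex.map φ.unop) ≫ boxMap ι (𝟙 _) from rfl,
      Category.assoc, σ.2, eConst_whisker]⟩
  map_id n := by
    refine ConcreteCategory.hom_ext _ _ fun σ => ?_
    apply Subtype.ext
    show boxMap (𝟙 B) (SSet.stdSimplex.map (𝟙 n.unop)) ≫ σ.1 = σ.1
    erw [CategoryTheory.Functor.map_id, boxMap_id, Category.id_comp]
  map_comp {n m k} φ ψ := by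
    refine ConcreteCategory.hom_ext _ _ fun σ => ?_
    apply Subtype.ext
    show boxMap (𝟙 B) (SSet.stdSimplex.map (ψ.unop ≫ φ.unop)) ≫ σ.1 = _
    erw [Functor.map_comp, boxMapR_comp, Category.assoc]
    rfl

/-- The forgetful map `(B \ X)^e ⟶ B \ X`. -/
def fibFst {B : SSet.{0}} (ι : Δ[1] ⟶ B) (X : BSSet) (e : X.obj (op ⦋1⦌, op ⦋0⦌)) :
    fib ι X e ⟶ under B X where
  app n := ↾fun σ => σ.1
  naturality n m φ := rfl

/-- Restriction `(B' \ X)^e ⟶ (B \ X)^e` along `u : B ⟶ B'`. -/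
def fibRes {B B' : SSet.{0}} (u : B ⟶ B') (ι : Δ[1] ⟶ B) (X : BSSet)
    (e : X.obj (op ⦋1⦌, op ⦋0⦌)) :
    fib (ι ≫ u) X e ⟶ fib ι X e where
  app n := ↾fun σ => ⟨boxMap u (𝟙 _) ≫ σ.1, by
    rw [← Category.assoc,
      show boxMap ι (𝟙 _) ≫ boxMap u (𝟙 _) = boxMap (ι ≫ u) (𝟙 _) from rfl, σ.2]⟩
  naturality n m φ := rfl

/-- Pushforward `(B \ X)^e ⟶ (B \ Y)^{f(e)}` along `f : X ⟶ Y`. -/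
def fibPush {B : SSet.{0}} (ι : Δ[1] ⟶ B) {X Y : BSSet} (f : X ⟶ Y)
    (e : X.obj (op ⦋1⦌, op ⦋0⦌)) :
    fib ι X e ⟶ fib ι Y (fApp f e) where
  app n := ↾fun σ => ⟨σ.1 ≫ f, by rw [← Category.assoc, σ.2, eConst_comp]⟩
  naturality n m φ := rfl

lemma fibSq {B B' : SSet.{0}} (u : B ⟶ B') (ι : Δ[1] ⟶ B) {X Y : BSSet} (f : X ⟶ Y)
    (e : X.obj (op ⦋1⦌, op ⦋0⦌)) :
    fibRes u ι X e ≫ fibPush ι f e = fibPush (ι ≫ u) f e ≫ fibRes u ι Y (fApp f e) := rfl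

/-- The given square of fibered diagram spaces (restriction on top of pushforward)
is a homotopy pullback. -/
noncomputable def IsCocartAlong {B B' : SSet.{0}} (u : B ⟶ B') (ι : Δ[1] ⟶ B)
    {X Y : BSSet} (f : X ⟶ Y) (e : X.obj (op ⦋1⦌, op ⦋0⦌)) : Prop :=
  IsHomotopyPullback (fibRes u ι X e) (fibPush (ι ≫ u) f e)
    (fibPush ι f e) (fibRes u ι Y (fApp f e)) (fibSq u ι f e)

/-- The gap map `(B' \ X)^e ⟶ (B \ X)^e ×_{(B \ Y)^{f(e)}} (B' \ Y)^{f(e)}`. -/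
noncomputable def fibGap {B B' : SSet.{0}} (u : B ⟶ B') (ι : Δ[1] ⟶ B) {X Y : BSSet}
    (f : X ⟶ Y) (e : X.obj (op ⦋1⦌, op ⦋0⦌)) :
    fib (ι ≫ u) X e ⟶ pullback (fibPush ι f e) (fibRes u ι Y (fApp f e)) :=
  pullback.lift (fibRes u ι X e) (fibPush (ι ≫ u) f e) (fibSq u ι f e)

/-- The morphism `⦋1⦌ ⟶ ⦋n⦌` in the simplex category given by `0 ↦ 0`, `1 ↦ 1`. -/
def edge01Hom (n : ℕ) (h : 1 ≤ n) : (⦋1⦌ : SimplexCategory) ⟶ ⦋n⦌ :=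
  SimplexCategory.Hom.mk ⟨Fin.castLE (by simp only [SimplexCategory.len_mk]; omega),
    (Fin.strictMono_castLE _).monotone⟩

/-- The edge `Δ^{0,1} ⟶ Δⁿ`. -/
def edge01 (n : ℕ) (h : 1 ≤ n) : Δ[1] ⟶ Δ[n] :=
  SSet.stdSimplex.map (edge01Hom n h)

/-- The edge `Δ^{0,1} ⟶ Λ[n, 0]` of the left horn. -/
def edgeHorn (n : ℕ) (h : 2 ≤ n) : Δ[1] ⟶ Λ[n, 0] where
  app m := ↾fun a => ⟨(edge01 n (by omega)).app m a, by
    intro hEq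
    have h2 : (⟨2, by omega⟩ : Fin (n + 1)) ∈
        Set.range (SSet.stdSimplex.asOrderHom ((edge01 n (by omega)).app m a)) ∪ {0} := by
      rw [hEq]; exact Set.mem_univ _
    rcases h2 with ⟨j, hj⟩ | h0
    · have hsmall : ((SSet.stdSimplex.asOrderHom ((edge01 n (by omega)).app m a)) j : ℕ) < 2 :=
        ((SSet.stdSimplex.asOrderHom a) j).isLt
      have hv : ((SSet.stdSimplex.asOrderHom ((edge01 n (by omega)).app m a)) j : ℕ) = 2 :=
        congrArg Fin.val hj
      omega
    · rw [Set.mem_singleton_iff] at h0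
      have := congrArg Fin.val h0
      simp at this⟩
  naturality m m' φ := by
    refine ConcreteCategory.hom_ext _ _ fun a => ?_
    apply Subtype.ext
    exact ConcreteCategory.congr_hom ((edge01 n (by omega)).naturality φ) a

lemma edgeHorn_incl (n : ℕ) (h : 2 ≤ n) :
    edgeHorn n h ≫ (SSet.horn n 0).ι = edge01 n (by omega) := rfl

/-- A morphism `e ∈ X_{1,0}` is `f`-cocartesian if the square
`(Δ² \ X)^e → (Λ²₀ \ X)^e` over `(Δ² \ Y)^{f(e)} → (Λ²₀ \ Y)^{f(e)}` is a homotopy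
pullback. -/
noncomputable def IsCocartesianEdge {X Y : BSSet} (f : X ⟶ Y)
    (e : X.obj (op ⦋1⦌, op ⦋0⦌)) : Prop :=
  IsCocartAlong (SSet.horn 2 0).ι (edgeHorn 2 (by omega)) f e

/-- Abbreviation for `op [k]`. -/
abbrev sc (k : ℕ) : SimplexCategoryᵒᵖ := op (SimplexCategory.mk k)

lemma fibFst_push {B : SSet.{0}} (ι : Δ[1] ⟶ B) {X Y : BSSet} (f : X ⟶ Y)
    (e : X.obj (op ⦋1⦌, op ⦋0⦌)) :
    fibFst ι X e ≫ underPush B f = fibPush ι f e ≫ fibFst ι Y (fApp f e) := rfl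

lemma fibFst_whisker {B B' : SSet.{0}} (u : B ⟶ B') (ι : Δ[1] ⟶ B) (X : BSSet)
    (e : X.obj (op ⦋1⦌, op ⦋0⦌)) :
    fibFst (ι ≫ u) X e ≫ underWhisker u X = fibRes u ι X e ≫ fibFst ι X e := rfl

/-- The forgetful map
`(B' \ Y)^{f(e)} ×_{(B \ Y)^{f(e)}} (B \ X)^e ⟶ B' \ Y ×_{B \ Y} B \ X`
(with the pullbacks written in the other order). -/
noncomputable def fibForget {B B' : SSet.{0}} (u : B ⟶ B') (ι : Δ[1] ⟶ B) {X Y : BSSet}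
    (f : X ⟶ Y) (e : X.obj (op ⦋1⦌, op ⦋0⦌)) :
    pullback (fibPush ι f e) (fibRes u ι Y (fApp f e)) ⟶
      pullback (underPush B f) (underWhisker u Y) :=
  pullback.lift
    (pullback.fst _ _ ≫ fibFst ι X e)
    (pullback.snd _ _ ≫ fibFst (ι ≫ u) Y (fApp f e))
    (by
      rw [Category.assoc, Category.assoc, fibFst_push, fibFst_whisker,
        ← Category.assoc, ← Category.assoc, pullback.condition])

/-- The left spine `Lₙ ⊆ Δⁿ`: the union of the edge `Δ^{0,1}` with the spine
`Δ^{0,2} ∪ Δ^{2,3} ∪ ⋯ ∪ Δ^{n-1,n}` of the face `d₁Δⁿ`. -/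
def leftSpine (n : ℕ) : SSet.{0} where
  obj m := { a : Δ[n].obj m //
    (∀ j, ((SSet.stdSimplex.asOrderHom a) j : ℕ) ≤ 1) ∨
    (∀ j, ((SSet.stdSimplex.asOrderHom a) j : ℕ) = 0 ∨ ((SSet.stdSimplex.asOrderHom a) j : ℕ) = 2) ∨
    (∃ i : ℕ, 2 ≤ i ∧
      ∀ j, ((SSet.stdSimplex.asOrderHom a) j : ℕ) = i ∨ ((SSet.stdSimplex.asOrderHom a) j : ℕ) = i + 1) }
  map {m m'} φ := ↾fun a => ⟨Δ[n].map φ a.1, by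
    rcases a.2 with h | h | ⟨i, h2, h⟩
    exacts [Or.inl fun j => h _, Or.inr (Or.inl fun j => h _),
      Or.inr (Or.inr ⟨i, h2, fun j => h _⟩)]⟩
  map_id m := by
    refine ConcreteCategory.hom_ext _ _ fun a => ?_
    apply Subtype.ext
    show Δ[n].map (𝟙 m) a.1 = a.1
    simp
  map_comp φ ψ := by
    refine ConcreteCategory.hom_ext _ _ fun a => ?_
    apply Subtype.ext
    show Δ[n].map (φ ≫ ψ) a.1 = Δ[n].map ψ (Δ[n].map φ a.1)
    simp

def leftSpineIncl (n : ℕ) : leftSpine n ⟶ Δ[n] where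
  app m := ↾fun a => a.1
  naturality m m' φ := rfl

/-- The edge `Δ^{0,1} ⟶ Lₙ`. -/
def edgeLeftSpine (n : ℕ) (h : 1 ≤ n) : Δ[1] ⟶ leftSpine n where
  app m := ↾fun a => ⟨(edge01 n h).app m a,
    Or.inl fun j => Nat.lt_succ_iff.mp ((SSet.stdSimplex.asOrderHom a) j).isLt⟩
  naturality m m' φ := by
    refine ConcreteCategory.hom_ext _ _ fun a => ?_
    apply Subtype.ext
    exact ConcreteCategory.congr_hom ((edge01 n h).naturality φ) a

lemma edgeLeftSpine_incl (n : ℕ) (h : 1 ≤ n) :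
    edgeLeftSpine n h ≫ leftSpineIncl n = edge01 n h := rfl

/-- The `m`-th column `X_m` of a bisimplicial set, as a simplicial set. -/
def col (X : BSSet) (m : SimplexCategory) : SSet.{0} where
  obj n := X.obj (op m, n)
  map {n n'} g := ↾fun x => X.map (𝟙 (op m), g) x
  map_id n := by
    refine ConcreteCategory.hom_ext _ _ fun x => ?_
    exact ConcreteCategory.congr_hom (X.map_id (op m, n)) x
  map_comp {n n' n''} g h := by
    refine ConcreteCategory.hom_ext _ _ fun x => ?_
    exact FunctorToTypes.map_comp_apply X
      ((𝟙 (op m), g) : (op m, n) ⟶ (op m, n'))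
      ((𝟙 (op m), h) : (op m, n') ⟶ (op m, n'')) x

/-- Horizontal face of an edge `e ∈ X_{1,0}`: `hface 1 e` is the source vertex and
`hface 0 e` the target vertex. -/
def hface {X : BSSet} (i : Fin 2) (e : X.obj (op ⦋1⦌, op ⦋0⦌)) : X.obj (op ⦋0⦌, op ⦋0⦌) :=
  X.map ((((SimplexCategory.δ i).op : sc 1 ⟶ sc 0), 𝟙 (sc 0)) :
    (sc 1, sc 0) ⟶ (sc 0, sc 0)) e

/-- The degenerate (identity) edge on a vertex `x ∈ X_{0,0}`. -/
def hdegen {X : BSSet} (x : X.obj (op ⦋0⦌, op ⦋0⦌)) : X.obj (op ⦋1⦌, op ⦋0⦌) :=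
  X.map ((((SimplexCategory.σ 0).op : sc 0 ⟶ sc 1), 𝟙 (sc 0)) :
    (sc 0, sc 0) ⟶ (sc 1, sc 0)) x

/-- Vertical face of `h ∈ X_{1,1}`: `vface 1 h` and `vface 0 h` are the two endpoints of the
path `h` in the space `X_1`. -/
def vface {X : BSSet} (i : Fin 2) (h : X.obj (op ⦋1⦌, op ⦋1⦌)) : X.obj (op ⦋1⦌, op ⦋0⦌) :=
  X.map ((𝟙 (sc 1), ((SimplexCategory.δ i).op : sc 1 ⟶ sc 0)) :
    (sc 1, sc 1) ⟶ (sc 1, sc 0)) h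

/-- Horizontal faces of a `2`-simplex `τ ∈ X_{2,0}`. -/
def hface2 {X : BSSet} (i : Fin 3) (τ : X.obj (op ⦋2⦌, op ⦋0⦌)) : X.obj (op ⦋1⦌, op ⦋0⦌) :=
  X.map ((((SimplexCategory.δ i).op : sc 2 ⟶ sc 1), 𝟙 (sc 0)) :
    (sc 2, sc 0) ⟶ (sc 1, sc 0)) τ

/-- Two edges are connected by a path in the space `X_1` . -/
def PathConn (X : BSSet) : X.obj (op ⦋1⦌, op ⦋0⦌) → X.obj (op ⦋1⦌, op ⦋0⦌) → Prop :=
  Relation.EqvGen (fun e e' => ∃ h : X.obj (op ⦋1⦌, op ⦋1⦌), vface 1 h = e ∧ vface 0 h = e')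

/-- A homotopy equivalence in a Segal space, in the sense of Rezk: an edge admitting a right
inverse and a left inverse up to homotopy. -/
def IsHomotopyEquivalenceEdge (X : BSSet) (e : X.obj (op ⦋1⦌, op ⦋0⦌)) : Prop :=
  (∃ (g : X.obj (op ⦋1⦌, op ⦋0⦌)) (τ : X.obj (op ⦋2⦌, op ⦋0⦌)),
    hface2 2 τ = g ∧ hface2 0 τ = e ∧ PathConn X (hface2 1 τ) (hdegen (hface 1 g))) ∧
  (∃ (g' : X.obj (op ⦋1⦌, op ⦋0⦌)) (τ' : X.obj (op ⦋2⦌, op ⦋0⦌)),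
    hface2 2 τ' = e ∧ hface2 0 τ' = g' ∧ PathConn X (hface2 1 τ') (hdegen (hface 1 e)))

/-- A cocartesian edge in the quasicategorical sense, for a map `π : C ⟶ D` of simplicial
sets: all left horns (for `n ≥ 2`) whose initial edge is `c`, together with a filler
downstairs, can be filled upstairs. -/
def QCocartesianEdge {C D : SSet.{0}} (π : C ⟶ D) (c : C.obj (op ⦋1⦌)) : Prop :=
  ∀ (n : ℕ) (hn : 2 ≤ n) (g : (Λ[n, 0] : SSet.{0}) ⟶ C) (d : Δ[n] ⟶ D),
    SSet.yonedaEquiv (edgeHorn n hn ≫ g) = c →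
    g ≫ π = (SSet.horn n 0).ι ≫ d →
    ∃ h : Δ[n] ⟶ C, (SSet.horn n 0).ι ≫ h = g ∧ h ≫ π = d

/-- A cocartesian fibration of quasicategories: an inner fibration such that every edge
downstairs with a lift of its source admits a cocartesian lift. -/
def IsQCocartesianFibration {C D : SSet.{0}} (π : C ⟶ D) : Prop :=
  IsInnerFibration π ∧
  ∀ (σ : D.obj (op ⦋1⦌)) (x : C.obj (op ⦋0⦌)),
    π.app (op ⦋0⦌) x = D.map (SimplexCategory.δ 1).op σ →
    ∃ c : C.obj (op ⦋1⦌), QCocartesianEdge π c ∧ π.app (op ⦋1⦌) c = σ ∧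
      C.map (SimplexCategory.δ 1).op c = x

/-- A cocartesian fibration between Segal spaces: a Reedy fibration such that every
morphism of `Y` with a lift of its source vertex admits an `f`-cocartesian lift. -/
noncomputable def IsCocartesianFibration {X Y : BSSet} (f : X ⟶ Y) : Prop :=
  IsReedyFibration f ∧
  ∀ (σ : Y.obj (op ⦋1⦌, op ⦋0⦌)) (x : X.obj (op ⦋0⦌, op ⦋0⦌)),
    f.app (op ⦋0⦌, op ⦋0⦌) x = hface 1 σ →
    ∃ e : X.obj (op ⦋1⦌, op ⦋0⦌), IsCocartesianEdge f e ∧ fApp f e = σ ∧ hface 1 e = x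

/-- The identity `m`-simplex of the standard simplex `Δ^m`. -/
def idSimplex (m : SimplexCategory) : (SSet.stdSimplex.{0}.obj m).obj (op m) :=
  (SSet.stdSimplex.objEquiv (n := m) (m := op m)).symm (𝟙 m)

/-- A marked simplicial set: a simplicial set together with a set of marked edges
containing all degenerate edges. -/
structure MSSet : Type 1 where
  carrier : SSet.{0}
  marked : Set (carrier.obj (op ⦋1⦌))
  degen_marked : ∀ x : carrier.obj (op ⦋0⦌),
    carrier.map ((SimplexCategory.σ 0).op : sc 0 ⟶ sc 1) x ∈ marked

instance : Category MSSet where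
  Hom A B := { g : A.carrier ⟶ B.carrier // ∀ a ∈ A.marked, g.app (op ⦋1⦌) a ∈ B.marked }
  id A := ⟨𝟙 A.carrier, fun _ ha => ha⟩
  comp f g := ⟨f.1 ≫ g.1, fun a ha => g.2 _ (f.2 a ha)⟩
  id_comp f := Subtype.ext (Category.id_comp _)
  comp_id f := Subtype.ext (Category.comp_id _)
  assoc f g h := Subtype.ext (Category.assoc _ _ _)

/-- A marked bisimplicial set: a bisimplicial set together with a set of marked edges in
`X_{1,0}` containing all degenerate edges. -/
structure MBSSet : Type 1 where
  carrier : BSSet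
  marked : Set (carrier.obj (op ⦋1⦌, op ⦋0⦌))
  degen_marked : ∀ x : carrier.obj (op ⦋0⦌, op ⦋0⦌), hdegen x ∈ marked

instance : Category MBSSet where
  Hom X Y := { g : X.carrier ⟶ Y.carrier //
    ∀ a ∈ X.marked, g.app (op ⦋1⦌, op ⦋0⦌) a ∈ Y.marked }
  id X := ⟨𝟙 X.carrier, fun _ ha => ha⟩
  comp f g := ⟨f.1 ≫ g.1, fun a ha => g.2 _ (f.2 a ha)⟩
  id_comp f := Subtype.ext (Category.id_comp _)
  comp_id f := Subtype.ext (Category.comp_id _)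
  assoc f g h := Subtype.ext (Category.assoc _ _ _)

/-- The marked box product `A □ B` of a marked simplicial set and a simplicial set:
an edge `(a, b) ∈ A₁ × B₀` is marked iff `a` is marked. -/
def mBoxObj (A : MSSet) (B : SSet.{0}) : MBSSet where
  carrier := boxObj A.carrier B
  marked := { z | z.1 ∈ A.marked }
  degen_marked x := A.degen_marked x.1

/-- The marked division `A \ X`: its `n`-simplices are the marked maps `A □ Δⁿ ⟶ X`. -/
def mUnder (A : MSSet) (X : MBSSet) : SSet.{0} where
  obj n := { σ : boxObj A.carrier (SSet.stdSimplex.obj n.unop) ⟶ X.carrier //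
      ∀ a ∈ A.marked, ∀ b, σ.app (op ⦋1⦌, op ⦋0⦌) (a, b) ∈ X.marked }
  map {n m} φ := ↾fun σ =>
    ⟨boxMap (𝟙 A.carrier) (SSet.stdSimplex.map φ.unop) ≫ σ.1,
      fun a ha b => σ.2 a ha _⟩
  map_id n := by
    refine ConcreteCategory.hom_ext _ _ fun σ => ?_
    apply Subtype.ext
    show boxMap (𝟙 A.carrier) (SSet.stdSimplex.map (𝟙 n.unop)) ≫ σ.1 = σ.1
    erw [CategoryTheory.Functor.map_id, boxMap_id, Category.id_comp]
  map_comp {n m k} φ ψ := by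
    refine ConcreteCategory.hom_ext _ _ fun σ => ?_
    apply Subtype.ext
    show boxMap (𝟙 A.carrier) (SSet.stdSimplex.map (ψ.unop ≫ φ.unop)) ≫ σ.1 = _
    erw [Functor.map_comp, boxMapR_comp, Category.assoc]
    rfl

/-- Restriction of marked divisions along a map of marked simplicial sets. -/
def mUnderWhisker {A A' : MSSet} (u : A ⟶ A') (X : MBSSet) :
    mUnder A' X ⟶ mUnder A X where
  app n := ↾fun σ => ⟨boxMap u.1 (𝟙 _) ≫ σ.1, fun a ha b => σ.2 _ (u.2 a ha) b⟩
  naturality n m φ := rfl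

/-- Pushforward of marked divisions along a map of marked bisimplicial sets. -/
def mUnderPush (A : MSSet) {X Y : MBSSet} (f : X ⟶ Y) :
    mUnder A X ⟶ mUnder A Y where
  app n := ↾fun σ => ⟨σ.1 ≫ f.1, fun a ha b => f.2 _ (σ.2 a ha b)⟩
  naturality n m φ := rfl

lemma mUnderSq {A A' : MSSet} (u : A ⟶ A') {X Y : MBSSet} (f : X ⟶ Y) :
    mUnderWhisker u X ≫ mUnderPush A f = mUnderPush A' f ≫ mUnderWhisker u Y := rfl

/-- The gap map `⟨u \ f⟩` for marked divisions. -/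
noncomputable def mUnderGap {A A' : MSSet} (u : A ⟶ A') {X Y : MBSSet} (f : X ⟶ Y) :
    mUnder A' X ⟶ pullback (mUnderPush A f) (mUnderWhisker u Y) :=
  pullback.lift (mUnderWhisker u X) (mUnderPush A' f) (mUnderSq u f)

/-- The marked slice `X / B`: underlying simplicial set `X̊ / B`, an edge being marked iff
it sends each pair `(id₁, b)` to a marked edge of `X`. -/
def mOver (X : MBSSet) (B : SSet.{0}) : MSSet where
  carrier := overBS X.carrier B
  marked := { σ : (overBS X.carrier B).obj (op ⦋1⦌)|
      ∀ b : B.obj (op ⦋0⦌), NatTrans.app σ (op ⦋1⦌, op ⦋0⦌) (idSimplex ⦋1⦌, b) ∈ X.marked }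
  degen_marked x := by
    intro b
    have h := ConcreteCategory.congr_hom
      (x.naturality ((((SimplexCategory.σ 0).op : sc 0 ⟶ sc 1), 𝟙 (sc 0)) :
        (sc 0, sc 0) ⟶ (sc 1, sc 0))) ((idSimplex ⦋0⦌, b) : _ × _)
    simp only [types_comp_apply, boxObj_map, FunctorToTypes.map_id_apply] at h
    exact Set.mem_of_eq_of_mem h (X.degen_marked _)

/-- Pushforward of marked slices. -/
def mOverPush (B : SSet.{0}) {X Y : MBSSet} (f : X ⟶ Y) :
    mOver X B ⟶ mOver Y B :=
  ⟨overPush B f.1, by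
    intro σ hσ b
    exact f.2 _ (hσ b)⟩

/-- The functor `A □ - : SSet ⥤ MBSSet` for a marked simplicial set `A`. -/
def mBoxLFunctor (A : MSSet) : SSet.{0} ⥤ MBSSet where
  obj B := mBoxObj A B
  map v := ⟨boxMap (𝟙 A.carrier) v, fun z hz => hz⟩
  map_id B := Subtype.ext rfl
  map_comp v w := Subtype.ext rfl

/-- The functor `A \ - : MBSSet ⥤ SSet` for a marked simplicial set `A`. -/
def mUnderFunctor (A : MSSet) : MBSSet ⥤ SSet.{0} where
  obj X := mUnder A X
  map f := mUnderPush A f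
  map_id X := by
    apply NatTrans.ext
    funext n
    refine ConcreteCategory.hom_ext _ _ fun σ => ?_
    exact Subtype.ext (Category.comp_id _)
  map_comp f g := rfl

/-- The functor `- □ B : MSSet ⥤ MBSSet` for a simplicial set `B`. -/
def mBoxRFunctor (B : SSet.{0}) : MSSet ⥤ MBSSet where
  obj A := mBoxObj A B
  map u := ⟨boxMap u.1 (𝟙 B), fun z hz => u.2 z.1 hz⟩
  map_id A := Subtype.ext rfl
  map_comp u v := Subtype.ext rfl

/-- The functor `- / B : MBSSet ⥤ MSSet` for a simplicial set `B`. -/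
def mOverFunctor (B : SSet.{0}) : MBSSet ⥤ MSSet where
  obj X := mOver X B
  map f := mOverPush B f
  map_id X := by
    apply Subtype.ext
    apply NatTrans.ext
    funext n
    refine ConcreteCategory.hom_ext _ _ fun σ => ?_
    exact Category.comp_id σ
  map_comp f g := rfl

/-- The vertex `v` of a simplex. -/
def vertexOf {S : SSet.{0}} {n : SimplexCategoryᵒᵖ} (σ : S.obj n)
    (v : Fin (n.unop.len + 1)) : S.obj (op ⦋0⦌) :=
  S.map (Quiver.Hom.op
    (SimplexCategory.Hom.mk (OrderHom.const _ v) : (⦋0⦌ : SimplexCategory) ⟶ n.unop)) σ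

/-- A full inclusion of simplicial sets: a levelwise injection such that any simplex all of
whose vertices lie in the image itself lies in the image. -/
def IsFullInclusion {S T : SSet.{0}} (j : S ⟶ T) : Prop :=
  (∀ n, Function.Injective (j.app n)) ∧
  ∀ (n : SimplexCategoryᵒᵖ) (σ : T.obj n),
    (∀ v : Fin (n.unop.len + 1), vertexOf σ v ∈ Set.range (j.app (op ⦋0⦌))) →
    σ ∈ Set.range (j.app n)

/-- The inclusion `A \ X ⟶ Å \ X̊` of the marked division into the unmarked one. -/
def mUnderIncl (A : MSSet) (X : MBSSet) : mUnder A X ⟶ under A.carrier X.carrier where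
  app n := ↾fun σ => σ.1
  naturality n m φ := rfl

/-- A marking on a marked bisimplicial set respects path components if for every edge
`e → e'` in the space `X₁`, `e` is marked iff `e'` is marked. -/
def MarkingRespectsPathComponents (X : MBSSet) : Prop :=
  ∀ h : X.carrier.obj (op ⦋1⦌, op ⦋1⦌), (vface 1 h ∈ X.marked ↔ vface 0 h ∈ X.marked)

/-- The `ℒ`-marking on a simplicial set `B` equipped with an edge `ι : Δ¹ ⟶ B`: the only
marked edges are the degenerate ones and (the image of) `ι`. -/
def mkL (B : SSet.{0}) (ι : Δ[1] ⟶ B) : MSSet where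
  carrier := B
  marked := Set.range (B.map ((SimplexCategory.σ 0).op : sc 0 ⟶ sc 1)) ∪
    {ι.app (op ⦋1⦌) (idSimplex ⦋1⦌)}
  degen_marked x := Or.inl ⟨x, rfl⟩

/-- A map between `ℒ`-marked simplicial sets preserving the distinguished edges. -/
def mkLHom {A B : SSet.{0}} (i : A ⟶ B) (ιA : Δ[1] ⟶ A) (ιB : Δ[1] ⟶ B)
    (h : ιA ≫ i = ιB) : mkL A ιA ⟶ mkL B ιB :=
  ⟨i, by
    rintro a (⟨x, rfl⟩ | ha)
    · exact Or.inl ⟨i.app _ x, (NatTrans.naturality_apply i _ x).symm⟩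
    · right
      erw [Set.mem_singleton_iff] at ha ⊢
      rw [ha, ← h]
      rfl⟩

lemma eConst_app {X : BSSet} (m : SimplexCategory) (e : X.obj (op ⦋1⦌, op ⦋0⦌))
    (b : (SSet.stdSimplex.{0}.obj m).obj (sc 0)) :
    (eConst m e).app (op ⦋1⦌, op ⦋0⦌) (idSimplex ⦋1⦌, b) = e := by
  show X.map ((SSet.stdSimplex.objEquiv (n := (⦋1⦌ : SimplexCategory)) (m := sc 1)
      (idSimplex ⦋1⦌)).op,
    (SSet.stdSimplex.objEquiv (n := (⦋0⦌ : SimplexCategory)) (m := sc 0)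
      ((SSet.stdSimplex.map (toZero m)).app (sc 0) b)).op) e = e
  rw [show SSet.stdSimplex.objEquiv (n := (⦋1⦌ : SimplexCategory)) (m := sc 1) (idSimplex ⦋1⦌)
      = 𝟙 (⦋1⦌ : SimplexCategory) from Equiv.apply_symm_apply _ _,
    toZero_unique (SSet.stdSimplex.objEquiv (n := (⦋0⦌ : SimplexCategory)) (m := sc 0)
      ((SSet.stdSimplex.map (toZero m)).app (sc 0) b)) (𝟙 (⦋0⦌ : SimplexCategory))]
  exact FunctorToTypes.map_id_apply X e

/-- The map from a fibered diagram space to the `ℒ`-marked division, well-defined when the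
fixed edge `e` is marked. -/
def fibToMarked {B : SSet.{0}} (ι : Δ[1] ⟶ B) (X : MBSSet)
    (e : X.carrier.obj (op ⦋1⦌, op ⦋0⦌)) (he : e ∈ X.marked) :
    fib ι X.carrier e ⟶ mUnder (mkL B ι) X where
  app n := ↾fun σ => ⟨σ.1, by
    rintro a (⟨x, rfl⟩ | ha) b
    · have h := ConcreteCategory.congr_hom
        (σ.1.naturality ((((SimplexCategory.σ 0).op : sc 0 ⟶ sc 1), 𝟙 (sc 0)) :
          (sc 0, sc 0) ⟶ (sc 1, sc 0))) ((x, b) : _ × _)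
      simp only [types_comp_apply, boxObj_map, FunctorToTypes.map_id_apply] at h
      exact Set.mem_of_eq_of_mem h (X.degen_marked _)
    · erw [Set.mem_singleton_iff] at ha
      subst ha
      have h := ConcreteCategory.congr_hom (congrArg (fun τ => NatTrans.app τ (sc 1, sc 0)) σ.2)
        ((idSimplex ⦋1⦌, b) : _ × _)
      rw [eConst_app] at h
      exact Set.mem_of_eq_of_mem h he⟩
  naturality n m φ := rfl


/-!
Both gap maps are base changes of the unmarked gap map `G = ⟨i \ f⟩`, a Kan fibration because `f`
is a Reedy fibration: `⟨iℒ \ f⟩` along the inclusion of the marked part of its target (a map out of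
`(Δⁿ)ℒ` is marked as soon as its restriction to `Aℒ` is), and `p_e` along the fibre over `e` of the
restriction to `Δ^{0,1}`. For a marked edge `e` this fibre lies in the marked part, which gives
(1) ⇒ (2). Conversely, contracting `Δᵐ` onto its vertex `0` is a homotopy from a lifting problem for
`G` over the marked part to one whose restriction to `Δ^{0,1}` is constant at a marked edge `e`,
i.e. a problem for `p_e`; since `G` is a Kan fibration, a solution of the latter is transported
back along the homotopy.
-/

end Paper

open MonoidalCategory CartesianMonoidalCategory HomotopicalAlgebra SSet.modelCategoryQuillen

namespace CategoryTheory

instance Limits.pullback.map_mono {C : Type*} [Category C] {W X Y Z S T : C} (f₁ : W ⟶ S)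
    (f₂ : X ⟶ S) [HasPullback f₁ f₂] (g₁ : Y ⟶ T) (g₂ : Z ⟶ T) [HasPullback g₁ g₂]
    (i₁ : W ⟶ Y) (i₂ : X ⟶ Z) (i₃ : S ⟶ T) [Mono i₁] [Mono i₂] (eq₁ : f₁ ≫ i₃ = i₁ ≫ g₁)
    (eq₂ : f₂ ≫ i₃ = i₂ ≫ g₂) : Mono (pullback.map f₁ f₂ g₁ g₂ i₁ i₂ i₃ eq₁ eq₂) :=
  ⟨fun a b h => pullback.hom_ext
    (by simpa only [← cancel_mono i₁, Category.assoc, pullback.lift_fst] using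
      h =≫ pullback.fst _ _)
    (by simpa only [← cancel_mono i₂, Category.assoc, pullback.lift_snd] using
      h =≫ pullback.snd _ _)⟩

namespace IsPullback

variable {C : Type*} [Category C] {E' E P' P : C} {c' : E' ⟶ E} {G' : E' ⟶ P'} {G : E ⟶ P}
  {c : P' ⟶ P}

lemma of_mono_of_factor [Mono c'] [Mono c] (w : c' ≫ G = G' ≫ c)
    (h : ∀ {K : C} (x : K ⟶ E) (y : K ⟶ P'), x ≫ G = y ≫ c → ∃ x' : K ⟶ E', x' ≫ c' = x) :
    IsPullback c' G' G c := by
  refine IsPullback.of_isLimit' ⟨w⟩ (PullbackCone.IsLimit.mk _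
    (fun s => (h s.fst s.snd s.condition).choose)
    (fun s => (h s.fst s.snd s.condition).choose_spec) (fun s => ?_)
    (fun s l hl _ => by rw [← cancel_mono c', hl, (h s.fst s.snd s.condition).choose_spec]))
  rw [← cancel_mono c, Category.assoc, ← w, ← Category.assoc,
    (h s.fst s.snd s.condition).choose_spec, s.condition]

lemma hasLiftingProperty_iff (hpb : IsPullback c' G' G c) {K L : C} (j : K ⟶ L) :
    HasLiftingProperty j G' ↔
      ∀ ⦃a : K ⟶ E⦄ ⦃b : L ⟶ P⦄ (sq : CommSq a j G b), (∃ b' : L ⟶ P', b' ≫ c = b) →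
        sq.HasLift := by
  refine ⟨fun _ a b sq ⟨b', hb'⟩ => ?_, fun h => ⟨fun {a b} sq => ?_⟩⟩
  · subst hb'
    have sq' : CommSq (hpb.lift a (j ≫ b') (by rw [sq.w, Category.assoc])) j G' b' :=
      ⟨hpb.lift_snd _ _ _⟩
    exact ⟨⟨⟨sq'.lift ≫ c', by rw [sq'.fac_left_assoc, hpb.lift_fst],
      by rw [Category.assoc, hpb.w, sq'.fac_right_assoc]⟩⟩⟩
  · have sqG : CommSq (a ≫ c') j G (b ≫ c) :=
      ⟨by rw [Category.assoc, hpb.w, ← Category.assoc, sq.w, Category.assoc]⟩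
    obtain ⟨⟨l⟩⟩ := h sqG ⟨b, rfl⟩
    refine ⟨⟨⟨hpb.lift l.l b l.fac_right, hpb.hom_ext ?_ ?_, hpb.lift_snd _ _ _⟩⟩⟩
    · rw [Category.assoc, hpb.lift_fst, l.fac_left]
    · rw [Category.assoc, hpb.lift_snd, sq.w]

end IsPullback

end CategoryTheory

namespace SSet

universe u

lemma anodyneExtensions_stdSimplex_δ (j : Fin 2) :
    anodyneExtensions (stdSimplex.δ j : Δ[0] ⟶ (Δ[1] : SSet.{u})) := by
  intro E B p hp
  rw [← HomotopicalAlgebra.fibration_iff] at hp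
  refine ⟨fun {a b} sq => ?_⟩
  obtain ⟨φ, hφ, hφp⟩ := horn.IsCompatible.exists_lift (i := j.rev)
    (f := fun _ _ => a) trivial p b (fun k hk => by
      obtain rfl : k = j := by
        rw [Ne, Fin.ext_iff, Fin.val_rev] at hk
        omega
      exact sq.w)
  exact ⟨⟨⟨φ, hφ j (by rw [Ne, Fin.ext_iff, Fin.val_rev]; omega), hφp⟩⟩⟩

lemma whiskerLeft_stdSimplex_δ_zero (K : SSet.{u}) :
    K ◁ stdSimplex.δ 0 = fst K Δ[0] ≫ ι₁ := by
  ext : 1 <;> simp [stdSimplex.δ_zero_eq_const]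

lemma whiskerLeft_stdSimplex_δ_one (K : SSet.{u}) :
    K ◁ stdSimplex.δ 1 = fst K Δ[0] ≫ ι₀ := by
  ext : 1 <;> simp [stdSimplex.δ_one_eq_const]

lemma exists_homotopy_lift {K Z W : SSet.{u}} (g : Z ⟶ W) [Fibration g] {a : K ⟶ Z}
    (H : K ⊗ Δ[1] ⟶ W) (h : a ≫ g = ι₁ ≫ H) :
    ∃ U : K ⊗ Δ[1] ⟶ Z, ι₁ ≫ U = a ∧ U ≫ g = H := by
  have sq : CommSq (fst K Δ[0] ≫ a) (K ◁ stdSimplex.δ 0) g H :=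
    ⟨by rw [Category.assoc, h, whiskerLeft_stdSimplex_δ_zero, Category.assoc]⟩
  have := (anodyneExtensions_stdSimplex_δ 0).whiskerLeft K g (mem_fibrations g)
  have : IsSplitEpi (fst K Δ[0]) :=
    ⟨⟨lift (𝟙 K) (const (stdSimplex.obj₀Equiv.symm 0)), by simp⟩⟩
  refine ⟨sq.lift, ?_, sq.fac_right⟩
  rw [← cancel_epi (fst K Δ[0]), ← Category.assoc, ← whiskerLeft_stdSimplex_δ_zero, sq.fac_left]

/-- First lift the homotopy over `K`, then extend a solution of the transported problem across
the pushout-product of `j` with `{0} ⟶ Δ[1]`, an anodyne extension. -/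
lemma hasLift_of_homotopy {K L Z W : SSet.{u}} {j : K ⟶ L} [Mono j] {g : Z ⟶ W}
    [Fibration g] {a : K ⟶ Z} {b : L ⟶ W} (sq : CommSq a j g b)
    (H : L ⊗ Δ[1] ⟶ W) (hH : ι₁ ≫ H = b) :
    ∃ (a' : K ⟶ Z) (sq' : CommSq a' j g (ι₀ ≫ H)), sq'.HasLift → sq.HasLift := by
  obtain ⟨U, hU₁, hUg⟩ := exists_homotopy_lift g (a := a) (j ▷ Δ[1] ≫ H)
    (by rw [sq.w, ← hH, ι₁_comp_assoc])
  refine ⟨ι₀ ≫ U, ⟨by rw [Category.assoc, hUg, ι₀_comp_assoc]⟩, fun ⟨⟨l₀⟩⟩ => ?_⟩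
  let P := Functor.PushoutObjObj.ofHasPushout (curriedTensor SSet) j
    (stdSimplex.δ 1 : Δ[0] ⟶ Δ[1])
  have := anodyneExtensions_pushoutObjObjι P (anodyneExtensions_stdSimplex_δ 1) g
    (mem_fibrations g)
  let top := P.isPushout.desc (fst L Δ[0] ≫ l₀.l) U (by
    dsimp
    rw [whiskerLeft_stdSimplex_δ_one, whiskerRight_fst_assoc, l₀.fac_left, Category.assoc])
  have sq₂ : CommSq top P.ι g H := ⟨P.isPushout.hom_ext
    (by simp [top, l₀.fac_right, whiskerLeft_stdSimplex_δ_one]) (by simp [top, hUg])⟩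
  refine ⟨⟨⟨ι₁ ≫ sq₂.lift, ?_, by rw [Category.assoc, sq₂.fac_right, hH]⟩⟩⟩
  have hinr : j ▷ Δ[1] = P.inr ≫ P.ι := P.inr_ι.symm
  rw [← ι₁_comp_assoc, hinr, Category.assoc, sq₂.fac_left]
  simp [top, hU₁]

def stdSimplex.contraction (m : ℕ) : Δ[m] ⊗ Δ[1] ⟶ (Δ[m] : SSet.{u}) where
  app _ := ↾fun z => stdSimplex.objMk
    ⟨fun p => if stdSimplex.asOrderHom z.2 p = 0 then 0 else stdSimplex.asOrderHom z.1 p,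
     fun p q hpq => by
      dsimp only
      split_ifs with h₁ h₂ h₂
      · exact le_rfl
      · exact Fin.zero_le _
      · exact absurd (le_antisymm (h₂ ▸ (stdSimplex.asOrderHom z.2).monotone hpq)
          (Fin.zero_le _)) h₁
      · exact (stdSimplex.asOrderHom z.1).monotone hpq⟩
  naturality _ _ _ := rfl

lemma ι₁_stdSimplex_contraction (m : ℕ) :
    ι₁ ≫ stdSimplex.contraction m = 𝟙 (Δ[m] : SSet.{u}) := by
  ext ⟨⟨d⟩⟩ : 3
  funext x
  exact stdSimplex.ext _ _ fun p => if_neg (t := 0) (by decide : ¬ (1 : Fin 2) = 0)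

lemma ι₀_stdSimplex_contraction (m : ℕ) :
    ι₀ ≫ stdSimplex.contraction.{u} m = const (stdSimplex.obj₀Equiv.symm 0) := by
  ext n x
  rfl

end SSet

namespace Paper

lemma IsKanFibration.fibration {Z W : SSet.{0}} {g : Z ⟶ W} (hg : IsKanFibration g) :
    Fibration g := by
  rw [fibration_iff]
  intro _ _ _ h
  simp only [J, MorphismProperty.iSup_iff] at h
  obtain ⟨n, ⟨i⟩⟩ := h
  exact hg n i

section Fibres

variable {B B' : SSet.{0}} (u : B ⟶ B') (ι : Δ[1] ⟶ B) {X Y : BSSet} (f : X ⟶ Y)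
  (e : X.obj (op ⦋1⦌, op ⦋0⦌))

instance : Mono (fibFst ι X e) :=
  have (n : SimplexCategoryᵒᵖ) : Mono ((fibFst ι X e).app n) :=
    (mono_iff_injective _).2 fun _ _ => Subtype.ext
  NatTrans.mono_of_mono_app _

lemma const_eConst_app {K : SSet.{0}} {n : SimplexCategoryᵒᵖ} (k : K.obj n) :
    (SSet.const (eConst ⦋0⦌ e) : K ⟶ under Δ[1] X).app n k = eConst n.unop e :=
  eConst_whisker _ e

lemma fibFst_comp_underWhisker :
    fibFst ι X e ≫ underWhisker ι X = SSet.const (eConst ⦋0⦌ e) := by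
  refine NatTrans.ext (funext fun n => ConcreteCategory.hom_ext _ _ fun σ => ?_)
  exact σ.2.trans (const_eConst_app e σ).symm

lemma exists_fibFst_comp_eq {K : SSet.{0}} (t : K ⟶ under B X)
    (ht : t ≫ underWhisker ι X = SSet.const (eConst ⦋0⦌ e)) :
    ∃ t' : K ⟶ fib ι X e, t' ≫ fibFst ι X e = t :=
  ⟨{ app n := ↾fun k => ⟨t.app n k,
        (ConcreteCategory.congr_hom (NatTrans.congr_app ht n) k).trans (const_eConst_app e k)⟩
     naturality _ _ φ := ConcreteCategory.hom_ext _ _ fun k =>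
       Subtype.ext (ConcreteCategory.congr_hom (t.naturality φ) k) }, rfl⟩

lemma underGap_fst : underGap u f ≫ pullback.fst _ _ = underWhisker u X :=
  pullback.lift_fst _ _ _

lemma fibForget_fst :
    fibForget u ι f e ≫ pullback.fst _ _ = pullback.fst _ _ ≫ fibFst ι X e :=
  pullback.lift_fst _ _ _

lemma fibForget_snd :
    fibForget u ι f e ≫ pullback.snd _ _ = pullback.snd _ _ ≫ fibFst (ι ≫ u) Y (fApp f e) :=
  pullback.lift_snd _ _ _

instance : Mono (fibForget u ι f e) :=
  pullback.map_mono _ _ _ _ (fibFst ι X e) (fibFst (ι ≫ u) Y (fApp f e)) (fibFst ι Y (fApp f e))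
    rfl rfl

lemma isPullback_fibFst_underGap :
    IsPullback (fibFst (ι ≫ u) X e) (fibGap u ι f e) (underGap u f) (fibForget u ι f e) := by
  refine IsPullback.of_mono_of_factor (pullback.hom_ext ?_ ?_) fun x y hxy => ?_
  · simp only [underGap, fibGap, Category.assoc, fibForget_fst, pullback.lift_fst,
      pullback.lift_fst_assoc]
    rfl
  · simp only [underGap, fibGap, Category.assoc, fibForget_snd, pullback.lift_snd,
      pullback.lift_snd_assoc]
    rfl
  refine exists_fibFst_comp_eq _ e x ?_
  calc x ≫ underWhisker (ι ≫ u) X = (x ≫ underGap u f ≫ pullback.fst _ _) ≫ underWhisker ι X := by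
        rw [underGap_fst]; rfl
    _ = y ≫ (fibForget u ι f e ≫ pullback.fst _ _) ≫ underWhisker ι X := by
        rw [← Category.assoc x, hxy]; simp only [Category.assoc]
    _ = SSet.const (eConst ⦋0⦌ e) := by
        rw [fibForget_fst, Category.assoc, fibFst_comp_underWhisker]; rfl

lemma exists_comp_fibForget_eq {K : SSet.{0}} (q : K ⟶ pullback (underPush B f) (underWhisker u Y))
    (hq : q ≫ pullback.fst _ _ ≫ underWhisker ι X = SSet.const (eConst ⦋0⦌ e)) :
    ∃ q', q' ≫ fibForget u ι f e = q := by
  obtain ⟨qX, hqX⟩ := exists_fibFst_comp_eq ι e (q ≫ pullback.fst _ _) (by rw [Category.assoc, hq])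
  obtain ⟨qY, hqY⟩ := exists_fibFst_comp_eq (ι ≫ u) (fApp f e) (q ≫ pullback.snd _ _) <| by
    calc (q ≫ pullback.snd _ _) ≫ underWhisker (ι ≫ u) Y
        = (q ≫ pullback.fst _ _ ≫ underWhisker ι X) ≫ underPush Δ[1] f := by
          simp only [Category.assoc]
          rw [underSq, pullback.condition_assoc]
          rfl
      _ = SSet.const (eConst ⦋0⦌ (fApp f e)) := by
          rw [hq]
          exact (SSet.const_comp _ _).trans (congrArg SSet.const (eConst_comp f e))
  refine ⟨pullback.lift qX qY ?_, pullback.hom_ext ?_ ?_⟩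
  · rw [← cancel_mono (fibFst ι Y (fApp f e)), Category.assoc, Category.assoc, ← fibFst_push,
      ← fibFst_whisker, ← Category.assoc, hqX, ← Category.assoc, hqY, Category.assoc,
      Category.assoc, pullback.condition]
  · rw [Category.assoc, fibForget_fst, pullback.lift_fst_assoc, hqX]
  · rw [Category.assoc, fibForget_snd, pullback.lift_snd_assoc, hqY]

end Fibres

section Marked

lemma app_degenerate_mem_marked (X : MBSSet) {A B : SSet.{0}} (σ : boxObj A B ⟶ X.carrier)
    (a : A.obj (op ⦋0⦌)) (b : B.obj (op ⦋0⦌)) :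
    σ.app (op ⦋1⦌, op ⦋0⦌) (A.map (SimplexCategory.σ 0).op a, b) ∈ X.marked := by
  have h := NatTrans.naturality_apply σ
    ((((SimplexCategory.σ 0).op : sc 0 ⟶ sc 1), 𝟙 (sc 0)) : (sc 0, sc 0) ⟶ (sc 1, sc 0))
    ((a, b) : _ × _)
  simp only [boxObj_map, Functor.map_id_apply] at h
  exact h ▸ X.degen_marked _

instance (A : MSSet) (X : MBSSet) : Mono (mUnderIncl A X) :=
  have (n : SimplexCategoryᵒᵖ) : Mono ((mUnderIncl A X).app n) :=
    (mono_iff_injective _).2 fun _ _ => Subtype.ext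
  NatTrans.mono_of_mono_app _

variable {A A' : MSSet} (u : A ⟶ A') {X Y : MBSSet} (f : X ⟶ Y)

noncomputable def mUnderForget :
    pullback (mUnderPush A f) (mUnderWhisker u Y) ⟶
      pullback (underPush A.carrier f.1) (underWhisker u.1 Y.carrier) :=
  pullback.map _ _ _ _ (mUnderIncl A X) (mUnderIncl A' Y) (mUnderIncl A Y) rfl rfl

lemma mUnderForget_fst :
    mUnderForget u f ≫ pullback.fst _ _ = pullback.fst _ _ ≫ mUnderIncl A X :=
  pullback.lift_fst _ _ _

lemma mUnderForget_snd :
    mUnderForget u f ≫ pullback.snd _ _ = pullback.snd _ _ ≫ mUnderIncl A' Y :=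
  pullback.lift_snd _ _ _

instance : Mono (mUnderForget u f) :=
  pullback.map_mono _ _ _ _ (mUnderIncl A X) (mUnderIncl A' Y) (mUnderIncl A Y) rfl rfl

lemma isPullback_mUnderIncl_underGap
    (hu : ∀ a' ∈ A'.marked, a' ∈ Set.range (A'.carrier.map (SimplexCategory.σ 0).op) ∨
      a' ∈ u.1.app _ '' A.marked) :
    IsPullback (mUnderIncl A' X) (mUnderGap u f) (underGap u.1 f.1) (mUnderForget u f) := by
  refine IsPullback.of_mono_of_factor (pullback.hom_ext ?_ ?_) fun x y hxy => ?_
  · simp only [underGap, mUnderGap, Category.assoc, mUnderForget_fst, pullback.lift_fst,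
      pullback.lift_fst_assoc]
    rfl
  · simp only [underGap, mUnderGap, Category.assoc, mUnderForget_snd, pullback.lift_snd,
      pullback.lift_snd_assoc]
    rfl
  have hres : x ≫ underWhisker u.1 X.carrier = y ≫ pullback.fst _ _ ≫ mUnderIncl A X := by
    rw [← mUnderForget_fst, ← underGap_fst, ← Category.assoc, hxy, Category.assoc]
  refine ⟨{ app n := ↾fun k => ⟨x.app n k, ?_⟩, naturality _ _ φ := ?_ }, rfl⟩
  · rintro a' ha' b
    rcases hu a' ha' with ⟨a, rfl⟩ | ⟨a, ha, rfl⟩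
    · exact app_degenerate_mem_marked X _ a b
    · have h := ConcreteCategory.congr_hom (NatTrans.congr_app
        (ConcreteCategory.congr_hom (NatTrans.congr_app hres n) k) (op ⦋1⦌, op ⦋0⦌))
        ((a, b) : _ × _)
      exact h ▸ ((y ≫ pullback.fst _ _).app n k).2 a ha b
  · exact ConcreteCategory.hom_ext _ _ fun k => Subtype.ext
      (ConcreteCategory.congr_hom (x.naturality φ) k)

end Marked

lemma stdSimplex_map_objEquiv_idSimplex {m : SimplexCategory} {n : SimplexCategoryᵒᵖ}
    (x : (SSet.stdSimplex.obj m).obj n) :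
    (SSet.stdSimplex.obj m).map (SSet.stdSimplex.objEquiv x).op (idSimplex m) = x := by
  rw [idSimplex, SSet.stdSimplex.map_objEquiv_symm, Quiver.Hom.unop_op, Category.comp_id,
    Equiv.symm_apply_apply]

lemma yonedaBox_app_idSimplex {X : BSSet} (τ : boxObj Δ[1] Δ[0] ⟶ X) :
    yonedaBox (τ.app (op ⦋1⦌, op ⦋0⦌) (idSimplex ⦋1⦌, idSimplex ⦋0⦌)) = τ := by
  refine NatTrans.ext (funext fun p => ConcreteCategory.hom_ext _ _ fun x => ?_)
  refine (NatTrans.naturality_apply τ (((SSet.stdSimplex.objEquiv x.1).op,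
    (SSet.stdSimplex.objEquiv x.2).op) : (sc 1, sc 0) ⟶ p) _).symm.trans ?_
  exact congrArg (τ.app p)
    (Prod.ext (stdSimplex_map_objEquiv_idSimplex x.1) (stdSimplex_map_objEquiv_idSimplex x.2))

lemma eConst_zero_app_idSimplex {X : BSSet} (τ : boxObj Δ[1] Δ[0] ⟶ X) :
    eConst ⦋0⦌ (τ.app (op ⦋1⦌, op ⦋0⦌) (idSimplex ⦋1⦌, idSimplex ⦋0⦌)) = τ := by
  erw [eConst, toZero_unique (toZero ⦋0⦌) (𝟙 _), CategoryTheory.Functor.map_id]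
  exact (Category.id_comp _).trans (yonedaBox_app_idSimplex τ)

section LMarked

variable {B B' : SSet.{0}} (u : B ⟶ B') (ι : Δ[1] ⟶ B) {X Y : MBSSet} (f : X ⟶ Y)

lemma mkL_marked_degenerate_or_image :
    ∀ a' ∈ (mkL B' (ι ≫ u)).marked, a' ∈ Set.range (B'.map (SimplexCategory.σ 0).op) ∨
      a' ∈ (mkLHom u ι (ι ≫ u) rfl).1.app _ '' (mkL B ι).marked := by
  rintro a' (ha' | ha')
  · exact Or.inl ha'
  · exact Or.inr ⟨_, Or.inr rfl, ha'.symm⟩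

lemma exists_comp_mUnderForget_eq_fibForget {e : X.carrier.obj (op ⦋1⦌, op ⦋0⦌)}
    (he : e ∈ X.marked) :
    ∃ q, q ≫ mUnderForget (mkLHom u ι (ι ≫ u) rfl) f = fibForget u ι f.1 e :=
  ⟨pullback.map _ _ _ _ (fibToMarked ι X e he) (fibToMarked (ι ≫ u) Y (fApp f.1 e) (f.2 e he))
    (fibToMarked ι Y (fApp f.1 e) (f.2 e he)) rfl rfl,
    pullback.hom_ext
      (by rw [Category.assoc, mUnderForget_fst, pullback.lift_fst_assoc]
          exact (fibForget_fst u ι f.1 e).symm)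
      (by rw [Category.assoc, mUnderForget_snd, pullback.lift_snd_assoc]
          exact (fibForget_snd u ι f.1 e).symm)⟩

/-- The edge `e` is the value at `(Δ^{0,1}, x)` of the marked diagram `b x`. -/
lemma exists_comp_fibForget_eq_const_comp {K L : SSet.{0}}
    (b : L ⟶ pullback (mUnderPush (mkL B ι) f) (mUnderWhisker (mkLHom u ι (ι ≫ u) rfl) Y))
    (x : L _⦋0⦌) :
    ∃ e ∈ X.marked, ∃ q : K ⟶ pullback (fibPush ι f.1 e) (fibRes u ι Y.carrier (fApp f.1 e)),
      q ≫ fibForget u ι f.1 e = SSet.const x ≫ b ≫ mUnderForget (mkLHom u ι (ι ≫ u) rfl) f := by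
  let σ := (b ≫ pullback.fst _ _).app _ x
  refine ⟨_, σ.2 _ (Or.inr rfl) (idSimplex ⦋0⦌), exists_comp_fibForget_eq u ι f.1 _ _ ?_⟩
  have h := mUnderForget_fst (mkLHom u ι (ι ≫ u) rfl) f
  calc (SSet.const x ≫ b ≫ mUnderForget _ f) ≫ pullback.fst _ _ ≫ underWhisker ι X.carrier
      = SSet.const x ≫ (b ≫ pullback.fst _ _) ≫ mUnderIncl _ X ≫ underWhisker ι X.carrier := by
        simp only [Category.assoc]
        erw [reassoc_of% h]
    _ = SSet.const (eConst ⦋0⦌ _) :=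
        (SSet.const_comp _ _).trans (congrArg SSet.const (eConst_zero_app_idSimplex _).symm)

end LMarked

/-- for a Reedy fibration `f : X ⟶ Y` of marked bisimplicial sets, `n ≥ 2` and
a simplicial subset `i : A ⊆ Δⁿ` containing the edge `Δ^{0,1}`, the marked gap map
`⟨iℒ \\ f⟩ : (Δⁿ)^ℒ \\ X ⟶ (Δⁿ)^ℒ \\ Y ×_{A^ℒ \\ Y} A^ℒ \\ X` is a trivial Kan fibration
iff for every marked edge `e ∈ X_{1,0}` the pointwise map
`p_e : (Δⁿ \\ X̊)^e ⟶ (Δⁿ \\ Y̊)^{f(e)} ×_{(A \\ Y̊)^{f(e)}} (A \\ X̊)^e` is a trivial Kan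
fibration. -/
theorem marked_gap_trivial_fibration_iff_pointwise {X Y : MBSSet} (f : X ⟶ Y)
    (hf : IsReedyFibration f.1) (n : ℕ) (A : SSet.{0}) (i : A ⟶ Δ[n])
    (hi : Mono i) (ι : Δ[1] ⟶ A) :
    IsTrivialKanFibration (mUnderGap (mkLHom i ι (ι ≫ i) rfl) f) ↔
      ∀ e ∈ X.marked, IsTrivialKanFibration (fibGap i ι f.1 e) := by
  have hM := isPullback_mUnderIncl_underGap (mkLHom i ι (ι ≫ i) rfl) f
    (mkL_marked_degenerate_or_image i ι)
  refine ⟨fun h e he m => ?_, fun h m => ?_⟩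
  · rw [(isPullback_fibFst_underGap i ι f.1 e).hasLiftingProperty_iff]
    rintro a b sq ⟨b', rfl⟩
    obtain ⟨q, hq⟩ := exists_comp_mUnderForget_eq_fibForget i ι f he
    exact (hM.hasLiftingProperty_iff _).1 (h m) sq ⟨b' ≫ q, by rw [Category.assoc, hq]; rfl⟩
  · rw [hM.hasLiftingProperty_iff]
    rintro a b sq ⟨b', rfl⟩
    have : Fibration (underGap (mkLHom i ι (ι ≫ i) rfl).1 f.1) := (hf i hi).fibration
    obtain ⟨a', sq', hlift⟩ := SSet.hasLift_of_homotopy sq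
      (SSet.stdSimplex.contraction m ≫ b' ≫ mUnderForget _ f)
      (by rw [← Category.assoc, SSet.ι₁_stdSimplex_contraction, Category.id_comp])
    obtain ⟨e, he, q, hq⟩ := exists_comp_fibForget_eq_const_comp i ι f (K := Δ[m]) b'
      (SSet.stdSimplex.obj₀Equiv.symm 0)
    refine hlift (((isPullback_fibFst_underGap i ι f.1 e).hasLiftingProperty_iff _).1
      (h e he m) sq' ⟨q, ?_⟩)
    rw [hq, ← Category.assoc SSet.ι₀, SSet.ι₀_stdSimplex_contraction]

end Paper
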